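/- arXiv:2308.06395 — 2 statements merged into one kernel-verified Lean document; each statement's English description precedes it below -/
import Mathlib

section
/- Let Q be a commutative unital quantale and Σ a class of ideals of Q, equipped with the quantale topology generated by the sets X↑ = {J ∈ Σ : ⋀X ≤ J} (for nonempty sets X of ideals) as a subbasis of closed sets. If Σ contains every maximal ideal of Q, then Σ is quasi-compact. -/
namespace QuantalePaper

/-- An ideal of a complete lattice: nonempty, downward closed, closed under binary joins. -/
structure QIdeal (Q : Type*) [CompleteLattice Q] where
  carrier : Set Q
  nonempty' : carrier.Nonempty
  sup_mem' : ∀ ⦃x⦄, x ∈ carrier → ∀ ⦃y⦄, y ∈ carrier → x ⊔ y ∈ carrier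
  lower' : ∀ ⦃x⦄, x ∈ carrier → ∀ ⦃l : Q⦄, l ≤ x → l ∈ carrier

namespace QIdeal

variable {Q : Type*} [CompleteLattice Q]

instance : SetLike (QIdeal Q) Q where
  coe := carrier
  coe_injective := by rintro ⟨a,_,_,_⟩ ⟨b,_,_,_⟩ h; simpa using h

instance : PartialOrder (QIdeal Q) := .ofSetLike (QIdeal Q) Q

/-- A proper ideal. -/
def IsProper (I : QIdeal Q) : Prop := (⊤ : Q) ∉ I

/-- A maximal ideal: a proper ideal maximal among proper ideals. -/
def IsMaximal (I : QIdeal Q) : Prop :=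
  I.IsProper ∧ ∀ J : QIdeal Q, J.IsProper → I ≤ J → J = I

/-- A prime ideal. -/
def IsPrime [Mul Q] (I : QIdeal Q) : Prop :=
  I.IsProper ∧ ∀ x y : Q, x * y ∈ I → x ∈ I ∨ y ∈ I

end QIdeal

variable {Q : Type*} [CompleteLattice Q]

/-- The subbasic closed set `I↑ ∩ Σ` inside the subtype of a class `S` of ideals. -/
def up (S : Set (QIdeal Q)) (I : QIdeal Q) : Set ↥S := {J : ↥S | (I : Set Q) ⊆ (J : QIdeal Q)}

/-- The quantale topology on a class `S` of ideals, generated by the sets `up S I`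
as a subbasis of closed sets. -/
def qTop (S : Set (QIdeal Q)) : TopologicalSpace ↥S :=
  .generateFrom {U | ∃ I : QIdeal Q, U = (up S I)ᶜ}

/-- `X↑` for a set `X` of ideals: members of `S` containing the intersection `⋀X`,
with `∅↑ = ∅`. -/
def upSet (S : Set (QIdeal Q)) (X : Set (QIdeal Q)) : Set ↥S :=
  {J : ↥S | X.Nonempty ∧ ∀ x : Q, (∀ I ∈ X, x ∈ I) → x ∈ (J : QIdeal Q)}

/-!
Given subbasic closed sets `I↑` (`I ∈ T`) with the finite intersection property, consider the
ideal generated by `⋃ T`. If it is proper, a maximal ideal above it lies in `S` and in every `I↑`.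
Otherwise `⊤` lies below a finite join of elements of finitely many `I ∈ T`; a member of `S` lying
in those finitely many `I↑` then contains `⊤`, hence every ideal.
-/

namespace QIdeal

lemma bot_mem (I : QIdeal Q) : (⊥ : Q) ∈ I :=
  let ⟨_, hx⟩ := I.nonempty'
  I.lower' hx bot_le

lemma finset_sup_mem (I : QIdeal Q) {s : Finset Q} (hs : ↑s ⊆ (I : Set Q)) : s.sup id ∈ I := by
  classical
  induction s using Finset.induction with
  | empty => exact I.bot_mem
  | insert a s _ ih =>
    rw [Finset.coe_insert, Set.insert_subset_iff] at hs
    rw [Finset.sup_insert]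
    exact I.sup_mem' hs.1 (ih hs.2)

lemma le_of_top_mem {J : QIdeal Q} (hJ : (⊤ : Q) ∈ J) (I : QIdeal Q) : I ≤ J :=
  fun _ _ => J.lower' hJ le_top

def span (s : Set Q) : QIdeal Q where
  carrier := {x | ∃ t : Finset Q, ↑t ⊆ s ∧ x ≤ t.sup id}
  nonempty' := ⟨⊥, ∅, by simp, bot_le⟩
  sup_mem' := by
    classical
    rintro x ⟨t, hts, hxt⟩ y ⟨u, hus, hyu⟩
    refine ⟨t ∪ u, by simpa using ⟨hts, hus⟩, ?_⟩
    rw [Finset.sup_union]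
    exact sup_le_sup hxt hyu
  lower' := by
    rintro x ⟨t, hts, hxt⟩ l hl
    exact ⟨t, hts, hl.trans hxt⟩

lemma mem_span {s : Set Q} {x : Q} : x ∈ span s ↔ ∃ t : Finset Q, ↑t ⊆ s ∧ x ≤ t.sup id :=
  Iff.rfl

lemma subset_span (s : Set Q) : s ⊆ span s :=
  fun x hx => ⟨{x}, by simpa using hx, by simp⟩

def toOrderIdeal (I : QIdeal Q) : Order.Ideal Q where
  carrier := I
  lower' _ _ hl hx := I.lower' hx hl
  nonempty' := I.nonempty'
  directed' x hx y hy := ⟨x ⊔ y, I.sup_mem' hx hy, le_sup_left, le_sup_right⟩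

def ofOrderIdeal (I : Order.Ideal Q) : QIdeal Q where
  carrier := I
  nonempty' := I.nonempty
  sup_mem' _ hx _ hy := I.sup_mem hx hy
  lower' _ hx _ hl := I.lower hl hx

lemma exists_isMaximal_le {K : QIdeal Q} (hK : K.IsProper) :
    ∃ M : QIdeal Q, M.IsMaximal ∧ K ≤ M := by
  obtain ⟨J, hKJ, hJ⟩ := (Order.Ideal.isProper_of_notMem (I := K.toOrderIdeal) hK).exists_le_maximal
  refine ⟨ofOrderIdeal J, ⟨hJ.top_notMem, fun L hL hJL => ?_⟩, hKJ⟩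
  rcases (show J ≤ L.toOrderIdeal from hJL).eq_or_lt with h | h
  · exact SetLike.coe_injective (congrArg SetLike.coe h).symm
  · have htop : (⊤ : Q) ∈ (L.toOrderIdeal : Set Q) := (hJ.maximal_proper h).symm ▸ Set.mem_univ ⊤
    exact absurd htop hL

end QIdeal

open QIdeal

lemma exists_mem_forall_le_of_finite {S : Set (QIdeal Q)}
    (hmax : ∀ M : QIdeal Q, M.IsMaximal → M ∈ S) {T : Set (QIdeal Q)}
    (hT : ∀ T' ⊆ T, T'.Finite → ∃ J ∈ S, ∀ I ∈ T', I ≤ J) :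
    ∃ J ∈ S, ∀ I ∈ T, I ≤ J := by
  set K := span (⋃ I ∈ T, (I : Set Q))
  have hTK : ∀ I ∈ T, I ≤ K := fun I hI =>
    (Set.subset_biUnion_of_mem (u := fun I : QIdeal Q => (I : Set Q)) hI).trans (subset_span _)
  by_cases hK : K.IsProper
  · obtain ⟨M, hM, hKM⟩ := exists_isMaximal_le hK
    exact ⟨M, hmax M hM, fun I hI => (hTK I hI).trans hKM⟩
  obtain ⟨t, hts, htop⟩ := mem_span.1 (not_not.1 hK)
  have hwit : ∀ y : ↥t, ∃ I ∈ T, y.1 ∈ I := fun y => by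
    simpa using hts y.2
  choose f hfT hyf using hwit
  obtain ⟨J, hJS, hJ⟩ := hT (Set.range f) (Set.range_subset_iff.2 hfT) (Set.finite_range f)
  have htJ : ↑t ⊆ (J : Set Q) := fun y hy => hJ _ ⟨⟨y, hy⟩, rfl⟩ (hyf ⟨y, hy⟩)
  exact ⟨J, hJS, fun I _ => le_of_top_mem (J.lower' (J.finset_sup_mem htJ) htop) I⟩

theorem stmt3_general (S : Set (QIdeal Q))
    (hmax : ∀ M : QIdeal Q, M.IsMaximal → M ∈ S) :
    @CompactSpace ↥S (qTop S) := by
  refine @compactSpace_generateFrom _ (qTop S) _ rfl fun P hP hcover => ?_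
  by_contra! hno
  have hbound : ∀ T' ⊆ {I | (up S I)ᶜ ∈ P}, T'.Finite → ∃ J ∈ S, ∀ I ∈ T', I ≤ J := by
    intro T' hT' hfin
    obtain ⟨J, hJ⟩ := Set.nonempty_compl.2 (hno _ (Set.image_subset_iff.2 hT') (hfin.image _))
    refine ⟨J.1, J.2, fun I hI => ?_⟩
    by_contra hIJ
    exact hJ ⟨_, Set.mem_image_of_mem _ hI, hIJ⟩
  obtain ⟨J, hJS, hJ⟩ := exists_mem_forall_le_of_finite hmax hbound
  obtain ⟨U, hUP, hJU⟩ := Set.mem_sUnion.1 (hcover ▸ Set.mem_univ (⟨J, hJS⟩ : ↥S))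
  obtain ⟨I, rfl⟩ := hP hUP
  exact hJU (hJ I hUP)

theorem stmt3 [CommMonoid Q] [IsQuantale Q] (htop : (1 : Q) = ⊤) (S : Set (QIdeal Q))
    (hmax : ∀ M : QIdeal Q, M.IsMaximal → M ∈ S) :
    @CompactSpace ↥S (qTop S) :=
  stmt3_general S hmax

end QuantalePaper
end

section
/- Let Q be a commutative unital quantale and Σ a class of ideals of Q with the quantale topology. Let M(Σ) denote the set of maximal elements of Σ (under inclusion), with the subspace topology. Then Σ is quasi-compact if and only if (a) every I ∈ Σ is contained in some J ∈ M(Σ), and (b) M(Σ) is quasi-compact. -/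
namespace QuantalePaper

variable {Q : Type*} [CompleteLattice Q]

/-! Since every `up S I` is closed, `I ⊆ J` says exactly that `I` specializes to `J`; in particular
open sets are closed downwards. In a compact space the closed sets `up S J`, `J` running through a
chain, have a common point, an upper bound of the chain, so Zorn's lemma puts a maximal element
above every point. Once every point specializes to a point of `M(Σ)`, an open set containing
`M(Σ)` is everything, so `M(Σ)` is compact exactly when `Σ` is. -/

section Topology

variable {X : Type*} [TopologicalSpace X]

lemma eq_univ_of_isOpen_of_forall_specializes {M U : Set X} (h : ∀ x, ∃ m ∈ M, x ⤳ m)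
    (hU : IsOpen U) (hMU : M ⊆ U) : U = Set.univ :=
  Set.eq_univ_of_forall fun x => by
    obtain ⟨m, hm, hxm⟩ := h x
    exact hxm.mem_open hU (hMU hm)

lemma isCompact_iff_compactSpace_of_forall_specializes {M : Set X} (h : ∀ x, ∃ m ∈ M, x ⤳ m) :
    IsCompact M ↔ CompactSpace X := by
  rw [← isCompact_univ_iff]
  constructor
  · intro hM
    refine isCompact_of_finite_subcover fun U hU hcov => ?_
    obtain ⟨t, ht⟩ := hM.elim_finite_subcover U hU ((Set.subset_univ M).trans hcov)
    exact ⟨t, (eq_univ_of_isOpen_of_forall_specializes h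
      (isOpen_biUnion fun i _ => hU i) ht).ge⟩
  · intro hX
    refine isCompact_of_finite_subcover fun U hU hcov => ?_
    obtain ⟨t, ht⟩ := hX.elim_finite_subcover U hU
      (eq_univ_of_isOpen_of_forall_specializes h (isOpen_iUnion hU) hcov).ge
    exact ⟨t, (Set.subset_univ M).trans ht⟩

lemma exists_le_isMax_of_compactSpace [CompactSpace X] [Preorder X] [ClosedIciTopology X]
    (x : X) : ∃ m, x ≤ m ∧ IsMax m := by
  refine zorn_le_nonempty_Ici₀ x (fun c _ hc y hy => ?_) x le_rfl
  have : Nonempty c := ⟨⟨y, hy⟩⟩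
  obtain ⟨ub, hub⟩ := IsCompact.nonempty_iInter_of_directed_nonempty_isCompact_isClosed
    (fun z : c => Set.Ici (z : X))
    (hc.mono_rel fun _ _ h => Set.Ici_subset_Ici.2 h).directed
    (fun _ => Set.nonempty_Ici) (fun _ => isClosed_Ici.isCompact) (fun _ => isClosed_Ici)
  exact ⟨ub, fun z hz => Set.mem_iInter.1 hub ⟨z, hz⟩⟩

end Topology

lemma forall_exists_le_maximal_iff {α : Type*} [PartialOrder α] (S : Set α) :
    (∀ I ∈ S, ∃ J ∈ S, I ≤ J ∧ ∀ K ∈ S, J ≤ K → K = J) ↔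
      ∀ I : S, ∃ J : S, I ≤ J ∧ ∀ K : S, J ≤ K → K = J := by
  simp only [Subtype.forall, Subtype.exists, Subtype.mk_le_mk, Subtype.mk.injEq, exists_prop]

section QuantaleTopology

attribute [local instance] qTop

variable (S : Set (QIdeal Q))

lemma isClosed_up (I : QIdeal Q) : IsClosed (up S I) :=
  ⟨.basic _ ⟨I, rfl⟩⟩

instance closedIciTopology_qTop : ClosedIciTopology S :=
  ⟨fun J => isClosed_up S J⟩

variable {S}

lemma specializes_iff_le {I J : S} : I ⤳ J ↔ I ≤ J := by
  refine ⟨fun h => h.mem_closed (isClosed_up S I) fun _ => id, fun h => ?_⟩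
  unfold Specializes qTop
  rw [TopologicalSpace.nhds_generateFrom, TopologicalSpace.nhds_generateFrom]
  refine le_iInf₂ fun U ⟨hJU, K, hU⟩ => iInf₂_le U ⟨?_, K, hU⟩
  subst hU
  exact fun hKI => hJU fun _ hx => h (hKI hx)

end QuantaleTopology

theorem stmt5_general (S : Set (QIdeal Q)) :
    @CompactSpace ↥S (qTop S) ↔
      ((∀ I ∈ S, ∃ J ∈ S, I ≤ J ∧ ∀ K ∈ S, J ≤ K → K = J) ∧
        @IsCompact ↥S (qTop S)
          {I : ↥S | ∀ J : ↥S, (I : QIdeal Q) ≤ (J : QIdeal Q) → J = I}) := by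
  let := qTop S
  rw [forall_exists_le_maximal_iff]
  have hM (ha : ∀ I : S, ∃ J : S, I ≤ J ∧ ∀ K : S, J ≤ K → K = J) :=
    isCompact_iff_compactSpace_of_forall_specializes
      (M := {I : ↥S | ∀ J : ↥S, (I : QIdeal Q) ≤ (J : QIdeal Q) → J = I}) fun I =>
        let ⟨J, hIJ, hJ⟩ := ha I
        ⟨J, hJ, specializes_iff_le.2 hIJ⟩
  refine ⟨fun hX => ?_, fun ⟨ha, hMc⟩ => (hM ha).1 hMc⟩
  have ha : ∀ I : S, ∃ J : S, I ≤ J ∧ ∀ K : S, J ≤ K → K = J := fun I =>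
    let ⟨J, hIJ, hJ⟩ := exists_le_isMax_of_compactSpace I
    ⟨J, hIJ, fun _ hJK => le_antisymm (hJ hJK) hJK⟩
  exact ⟨ha, (hM ha).2 hX⟩

theorem stmt5 [CommMonoid Q] [IsQuantale Q] (htop : (1 : Q) = ⊤) (S : Set (QIdeal Q)) :
    @CompactSpace ↥S (qTop S) ↔
      ((∀ I ∈ S, ∃ J ∈ S, I ≤ J ∧ ∀ K ∈ S, J ≤ K → K = J) ∧
        @IsCompact ↥S (qTop S)
          {I : ↥S | ∀ J : ↥S, (I : QIdeal Q) ≤ (J : QIdeal Q) → J = I}) :=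
  stmt5_general S

end QuantalePaper
end
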